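/- arXiv:1807.02325 — 2 statements merged into one kernel-verified Lean document; each statement's English description precedes it below -/
import Mathlib

section
/- For any finite subsets A, B ⊆ Z^d with d ≥ 3, Cap(A ∪ B) ≤ Cap(A) + Cap(B) − Cap(A ∩ B). -/
open Filter Finset MeasureTheory
open scoped symmDiff ENNReal

namespace SRW

/-- Vertices of `ℤ^d`. -/
abbrev V (d : ℕ) : Type := Fin d → ℤ

/-- The set of nearest-neighbor steps (the `2d` unit vectors `±e_i`) in `ℤ^d`. -/
def steps (d : ℕ) : Finset (V d) :=
  (Finset.univ : Finset (Fin d × Bool)).image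
    (fun p j => if j = p.1 then (if p.2 then 1 else -1) else 0)

/-- Position at time `k` of the walk started at `x` with step sequence `s`. -/
def pos {d : ℕ} (x : V d) (s : ℕ → V d) (k : ℕ) : V d :=
  x + ∑ i ∈ Finset.range k, s i

open Classical in
/-- Probability, for the simple random walk, of an event depending on the
first `n` steps (steps beyond `n` are set to `0`): each of the `(2d)^n`
admissible step sequences has equal probability. -/
noncomputable def probN (d n : ℕ) (P : (ℕ → V d) → Prop) : ℝ :=
  (((Fintype.piFinset fun _ : Fin n => steps d).filter
      (fun s => P fun i => if h : i < n then s ⟨i, h⟩ else 0)).card : ℝ) / ((2 * d : ℕ) : ℝ) ^ n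

/-- Expectation of a functional of the first `n` steps of the walk. -/
noncomputable def expN (d n : ℕ) (f : (ℕ → V d) → ℝ) : ℝ :=
  (∑ s ∈ Fintype.piFinset fun _ : Fin n => steps d,
      f fun i => if h : i < n then s ⟨i, h⟩ else 0) / ((2 * d : ℕ) : ℝ) ^ n

/-- Escape probability `P_x(H_A^+ = ∞)`: the walk started at `x` never
hits `A` at a positive time (decreasing limit of the finite-horizon events). -/
noncomputable def esc (d : ℕ) (A : Set (V d)) (x : V d) : ℝ :=
  ⨅ n : ℕ, probN d n (fun s => ∀ k, 1 ≤ k → k ≤ n → pos x s k ∉ A)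

/-- Newtonian capacity `Cap(A) = Σ_{x∈A} P_x(H_A^+ = ∞)`. -/
noncomputable def cap {d : ℕ} (A : Finset (V d)) : ℝ :=
  ∑ x ∈ A, esc d (↑A) x

/-- Green's function `G(z) = Σ_n P_0(S_n = z)`. -/
noncomputable def G (d : ℕ) (z : V d) : ℝ :=
  ∑' n : ℕ, probN d n (fun s => pos 0 s n = z)

/-- Truncated Green's function `G_T(z) = Σ_{n≤T} P_0(S_n = z)`. -/
noncomputable def GT (d T : ℕ) (z : V d) : ℝ :=
  ∑ n ∈ Finset.range (T + 1), probN d n (fun s => pos 0 s n = z)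

/-- Convolution `(G ⋆ G_T)(x) = Σ_y G(x-y) G_T(y)`. -/
noncomputable def GconvGT (d T : ℕ) (x : V d) : ℝ :=
  ∑' y : V d, G d (x - y) * GT d T y

/-- Euclidean norm on `ℤ^d`. -/
noncomputable def nrm {d : ℕ} (x : V d) : ℝ :=
  Real.sqrt (∑ i, ((x i : ℝ)) ^ 2)

/-- The range `{S_k : k ∈ I}` of the walk started at `x` over the set of times `I`. -/
noncomputable def rangeOn {d : ℕ} (x : V d) (s : ℕ → V d) (I : Finset ℕ) : Finset (V d) :=
  I.image (pos x s)

/-- Probability that the walk started at `z` hits both `A` and `B` in finite time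
(increasing limit of the finite-horizon probabilities). -/
noncomputable def hitBothProb (d : ℕ) (A B : Finset (V d)) (z : V d) : ℝ :=
  ⨆ n : ℕ, probN d n (fun s => (∃ k ≤ n, pos z s k ∈ A) ∧ (∃ k ≤ n, pos z s k ∈ B))

/-- The discrete cube `Q(x,r) = [x - r/2, x + r/2)^d ∩ ℤ^d`. -/
def cube {d : ℕ} (x : V d) (r : ℝ) : Set (V d) :=
  {y | ∀ i, (x i : ℝ) - r / 2 ≤ (y i : ℝ) ∧ (y i : ℝ) < (x i : ℝ) + r / 2}

/-- The corrector `ξ_n(T)`. -/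
noncomputable def xi (d n T : ℕ) (s : ℕ → V d) : ℝ :=
  ∑ k ∈ Finset.range (n + 1), ∑ x ∈ rangeOn 0 s (Finset.Icc 0 k),
    esc d (↑(rangeOn 0 s (Finset.Icc 0 k))) x * (GconvGT d T (x - pos 0 s k) / T)

/-- The capacity cross-term `χ_C(A,B) = Cap(A) + Cap(B) - Cap(A ∪ B)`. -/
noncomputable def chiC {d : ℕ} (A B : Finset (V d)) : ℝ := cap A + cap B - cap (A ∪ B)

open Classical in
/-- Conditional expectation, given the first `m` steps (equal to those of `s`),
of a functional of the first `n` steps. -/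
noncomputable def condExpN (d n m : ℕ) (f : (ℕ → V d) → ℝ) (s : ℕ → V d) : ℝ :=
  expN d n (fun s' => if ∀ i < m, s' i = s i then f s' else 0) * ((2 * d : ℕ) : ℝ) ^ m

/-- The compensator `ξ_n^*(T)`. -/
noncomputable def xiStar (d n T : ℕ) (s : ℕ → V d) : ℝ :=
  (1 / (T : ℝ)) * ∑ j ∈ Finset.range T, ∑ l ∈ Finset.Icc 1 (n / T - 1),
    condExpN d (n + T) (j + l * T)
      (fun s' => chiC (rangeOn 0 s' (Finset.Icc j (j + l * T)))
        (rangeOn 0 s' (Finset.Icc (j + l * T) (j + (l + 1) * T)))) s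

/-- `E[Cap(R_n)]`, the expected capacity of the range up to time `n`. -/
noncomputable def expCapRange (d n : ℕ) : ℝ :=
  expN d n (fun s => cap (rangeOn 0 s (Finset.Icc 0 n)))

/-- The maximal capacity `c_n` of the range of a nearest-neighbor path with `n` steps. -/
noncomputable def maxPathCap (d n : ℕ) : ℝ :=
  sSup {y : ℝ | ∃ (x : V d) (s : ℕ → V d), (∀ i, s i ∈ steps d) ∧
    y = cap (rangeOn x s (Finset.Icc 0 n))}

/-- `Γ(A,Λ) = Σ_{x∈A} Σ_{y∈Λ} G(y-x) P_y(H_Λ^+ = ∞)`. -/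
noncomputable def GamFin (d : ℕ) (A : Finset (V d)) (Λ : Set (V d)) : ℝ :=
  ∑ x ∈ A, ∑' y : Λ, G d ((y : V d) - x) * esc d Λ (y : V d)

/-- `P(Γ(R̃_∞, Λ) > t)`, as the increasing limit of the finite-horizon probabilities. -/
noncomputable def PGam (d : ℕ) (Λ : Set (V d)) (t : ℝ) : ℝ :=
  ⨆ N : ℕ, probN d N (fun s => t < GamFin d (rangeOn 0 s (Finset.Icc 0 N)) Λ)

/-- `E_x[Γ(R̃_∞, Λ)]`, as the increasing limit of the finite-horizon expectations. -/
noncomputable def EGam (d : ℕ) (x : V d) (Λ : Set (V d)) : ℝ :=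
  ⨆ N : ℕ, expN d N (fun s => GamFin d (rangeOn x s (Finset.Icc 0 N)) Λ)

/-- The law of the first `n` steps of two independent simple random walks:
uniform measure on pairs of admissible step sequences of length `n`. -/
noncomputable def pairLevel (d n : ℕ) : Measure ((Fin n → V d) × (Fin n → V d)) :=
  (((2 * d : ℕ) : ℝ≥0∞) ^ (2 * n))⁻¹ •
    ∑ a ∈ Fintype.piFinset fun _ : Fin n => steps d,
      ∑ b ∈ Fintype.piFinset fun _ : Fin n => steps d, Measure.dirac (a, b)

open Classical in
/-- `Γ(R̃_∞, R_∞) = Σ_{x ∈ R̃_∞} Σ_{y ∈ R_∞} G(y-x) P_y(H_{R_∞}^+ = ∞)` for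
two (step sequences of) walks, with values in `ℝ≥0∞`. -/
noncomputable def gammaInf (d : ℕ) (sA sB : ℕ → V d) : ℝ≥0∞ :=
  ∑' x : V d, ∑' y : V d,
    if x ∈ Set.range (pos (0 : V d) sA) ∧ y ∈ Set.range (pos (0 : V d) sB) then
      ENNReal.ofReal (G d (y - x) * esc d (Set.range (pos (0 : V d) sB)) y)
    else 0

/-! The proof is a last-exit decomposition at finite horizon. Reversing time maps a walk from
`x ∈ D` that avoids `D` during `[1, n]` to a walk that hits `D` for the first time at time `n`,
so `Σ_{n ≤ N} Σ_{x ∈ D} P_x(no return to D by time n) = Σ_y P_y(H_D ≤ N)` for every finite `D`.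
The event `{H_{A ∪ B} ≤ N}` is the union, and `{H_{A ∩ B} ≤ N}` is contained in the intersection,
of `{H_A ≤ N}` and `{H_B ≤ N}`, so the right-hand side is submodular in `D`; the Cesàro means of
the left-hand side converge to `Cap(D)`. -/

section SubmodularCapacity

open Classical Topology

variable {d : ℕ}

def stepSeqs (d n : ℕ) : Finset (Fin n → V d) := Fintype.piFinset fun _ => steps d

def padSteps (n : ℕ) (s : Fin n → V d) : ℕ → V d := fun i => if h : i < n then s ⟨i, h⟩ else 0

lemma card_steps (d : ℕ) : (steps d).card = 2 * d := by
  rw [steps, Finset.card_image_of_injective, Finset.card_univ, Fintype.card_prod,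
    Fintype.card_fin, Fintype.card_bool, mul_comm]
  intro p q h
  have hp := congrFun h p.1
  simp only at hp
  by_cases hpq : p.1 = q.1
  · refine Prod.ext hpq ?_
    simp only [if_pos hpq, if_true] at hp
    cases hp' : p.2 <;> cases hq' : q.2 <;> simp [hp', hq'] at hp ⊢
  · simp only [if_neg hpq, if_true] at hp
    cases hp' : p.2 <;> simp [hp'] at hp

lemma neg_mem_steps {v : V d} (hv : v ∈ steps d) : -v ∈ steps d := by
  rw [steps, Finset.mem_image] at hv ⊢
  obtain ⟨p, -, rfl⟩ := hv
  refine ⟨(p.1, !p.2), Finset.mem_univ _, funext fun j => ?_⟩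
  by_cases h : j = p.1 <;> cases p.2 <;> simp [h]

lemma probN_eq_sum_ite (n : ℕ) (P : (ℕ → V d) → Prop) :
    probN d n P = (∑ s ∈ stepSeqs d n, if P (padSteps n s) then (1 : ℝ) else 0) /
      ((2 * d : ℕ) : ℝ) ^ n := by
  rw [probN, Finset.card_filter]
  push_cast
  rfl

lemma probN_nonneg (n : ℕ) (P : (ℕ → V d) → Prop) : 0 ≤ probN d n P := by
  rw [probN]; positivity

lemma probN_mono (n : ℕ) {P Q : (ℕ → V d) → Prop} (h : ∀ s, P s → Q s) :
    probN d n P ≤ probN d n Q := by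
  rw [probN_eq_sum_ite, probN_eq_sum_ite]
  gcongr with s
  split_ifs with hP hQ <;> first | exact le_rfl | exact zero_le_one | exact absurd (h _ hP) hQ

def DependsOnFirst (n : ℕ) (P : (ℕ → V d) → Prop) : Prop :=
  ∀ s t : ℕ → V d, (∀ i < n, s i = t i) → (P s ↔ P t)

lemma DependsOnFirst.mono {m n : ℕ} {P : (ℕ → V d) → Prop} (hP : DependsOnFirst m P)
    (hmn : m ≤ n) : DependsOnFirst n P :=
  fun s t h => hP s t fun i hi => h i (hi.trans_le hmn)

lemma sum_stepSeqs_succ (n : ℕ) (f : (Fin (n + 1) → V d) → ℝ) :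
    ∑ s ∈ stepSeqs d (n + 1), f s = ∑ s ∈ stepSeqs d n, ∑ v ∈ steps d, f (Fin.snoc s v) := by
  rw [← Finset.sum_product']
  refine Finset.sum_nbij' (fun s => (Fin.init s, s (Fin.last n))) (fun p => Fin.snoc p.1 p.2)
    ?_ ?_ ?_ ?_ ?_
  · intro s hs
    simp only [stepSeqs, Fintype.mem_piFinset, Finset.mem_product] at hs ⊢
    exact ⟨fun i => hs _, hs _⟩
  · intro p hp
    simp only [stepSeqs, Fintype.mem_piFinset, Finset.mem_product] at hp ⊢
    intro i
    induction i using Fin.lastCases with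
    | last => simpa using hp.2
    | cast i => simpa using hp.1 i
  · intro s _; exact Fin.snoc_init_self s
  · intro p _; simp
  · intro s _; rw [Fin.snoc_init_self]

lemma padSteps_snoc (n : ℕ) (s : Fin n → V d) (v : V d) :
    ∀ i < n, padSteps (n + 1) (Fin.snoc s v) i = padSteps n s i := by
  intro i hi
  rw [padSteps, padSteps, dif_pos (hi.trans n.lt_succ_self), dif_pos hi]
  exact Fin.snoc_castSucc (α := fun _ => V d) (i := ⟨i, hi⟩) ..

lemma probN_succ_of_dependsOnFirst (hd : 0 < d) {n : ℕ} {P : (ℕ → V d) → Prop}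
    (hP : DependsOnFirst n P) : probN d (n + 1) P = probN d n P := by
  have hsnoc : ∀ s : Fin n → V d, ∀ v,
      (if P (padSteps (n + 1) (Fin.snoc s v)) then (1 : ℝ) else 0) =
        if P (padSteps n s) then 1 else 0 := fun s v => by
    rw [hP _ _ (padSteps_snoc n s v)]
  have h2d : ((2 * d : ℕ) : ℝ) ≠ 0 := by positivity
  simp only [probN_eq_sum_ite, sum_stepSeqs_succ, hsnoc, Finset.sum_const, card_steps,
    nsmul_eq_mul, ← Finset.mul_sum, pow_succ]
  field_simp

lemma probN_eq_of_dependsOnFirst (hd : 0 < d) {n N : ℕ} (hnN : n ≤ N) {P : (ℕ → V d) → Prop}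
    (hP : DependsOnFirst n P) : probN d N P = probN d n P := by
  induction N, hnN using Nat.le_induction with
  | base => rfl
  | succ m hm ih => rw [probN_succ_of_dependsOnFirst hd (hP.mono hm), ih]

lemma pos_zero (x : V d) (s : ℕ → V d) : pos x s 0 = x := by
  simp [pos]

lemma pos_succ (x : V d) (s : ℕ → V d) (k : ℕ) : pos x s (k + 1) = pos x s k + s k := by
  simp [pos, Finset.sum_range_succ, add_assoc]

lemma pos_congr {x : V d} {s t : ℕ → V d} {n k : ℕ} (h : ∀ i < n, s i = t i) (hk : k ≤ n) :
    pos x s k = pos x t k := by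
  rw [pos, pos, Finset.sum_congr rfl fun i hi => h i ((Finset.mem_range.mp hi).trans_le hk)]

lemma pos_padSteps_self (x : V d) (n : ℕ) (s : Fin n → V d) :
    pos x (padSteps n s) n = x + ∑ i, s i := by
  rw [pos, ← Fin.sum_univ_eq_sum_range]
  simp [padSteps]

def Avoids (D : Set (V d)) (x : V d) (n : ℕ) (s : ℕ → V d) : Prop :=
  ∀ k, 1 ≤ k → k ≤ n → pos x s k ∉ D

def FirstHitAt (D : Set (V d)) (y : V d) (n : ℕ) (s : ℕ → V d) : Prop :=
  pos y s n ∈ D ∧ ∀ k < n, pos y s k ∉ D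

def HitsBy (D : Set (V d)) (y : V d) (N : ℕ) (s : ℕ → V d) : Prop :=
  ∃ k ≤ N, pos y s k ∈ D

lemma dependsOnFirst_avoids (D : Set (V d)) (x : V d) (n : ℕ) :
    DependsOnFirst n (Avoids D x n) := by
  intro s t h
  exact forall_congr' fun k => imp_congr_right fun _ => forall_congr' fun hk => by
    rw [pos_congr h hk]

lemma dependsOnFirst_firstHitAt (D : Set (V d)) (y : V d) (n : ℕ) :
    DependsOnFirst n (FirstHitAt D y n) := by
  intro s t h
  refine and_congr (by rw [pos_congr h le_rfl]) (forall_congr' fun k => ?_)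
  exact imp_congr_right fun hk => by rw [pos_congr h hk.le]

lemma tendsto_probN_avoids (hd : 0 < d) (D : Set (V d)) (x : V d) :
    Tendsto (fun n => probN d n (Avoids D x n)) atTop (𝓝 (esc d D x)) := by
  refine tendsto_atTop_ciInf (antitone_nat_of_succ_le fun n => ?_)
    ⟨0, Set.forall_mem_range.mpr fun n => probN_nonneg n _⟩
  calc probN d (n + 1) (Avoids D x (n + 1))
      ≤ probN d (n + 1) (Avoids D x n) :=
        probN_mono _ fun s hs k h1 h2 => hs k h1 (h2.trans n.le_succ)
    _ = probN d n (Avoids D x n) := probN_succ_of_dependsOnFirst hd (dependsOnFirst_avoids D x n)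

def revSteps (n : ℕ) (s : Fin n → V d) : Fin n → V d := fun i => -s i.rev

def reversePath (n : ℕ) (p : V d × (Fin n → V d)) : V d × (Fin n → V d) :=
  (p.1 + ∑ i, p.2 i, revSteps n p.2)

lemma revSteps_mem_stepSeqs {n : ℕ} {s : Fin n → V d} (hs : s ∈ stepSeqs d n) :
    revSteps n s ∈ stepSeqs d n := by
  simp only [stepSeqs, Fintype.mem_piFinset] at hs ⊢
  exact fun i => neg_mem_steps (hs _)

lemma reversePath_involutive (n : ℕ) : Function.Involutive (reversePath (d := d) n) := by
  intro p
  refine Prod.ext ?_ (funext fun i => by simp [reversePath, revSteps])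
  have : ∑ i, revSteps n p.2 i = -∑ i, p.2 i := by
    rw [← Finset.sum_neg_distrib]
    exact Fintype.sum_equiv Fin.revPerm _ _ fun i => rfl
  simp [reversePath, this]

lemma padSteps_revSteps {n : ℕ} (s : Fin n → V d) {i : ℕ} (hi : i < n) :
    padSteps n (revSteps n s) i = -padSteps n s (n - 1 - i) := by
  rw [padSteps, padSteps, dif_pos hi, dif_pos (by omega)]
  exact congrArg (fun j => -s j) (Fin.ext (by simp; omega))

lemma pos_reversePath {n : ℕ} (p : V d × (Fin n → V d)) {k : ℕ} (hk : k ≤ n) :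
    pos (reversePath n p).1 (padSteps n (reversePath n p).2) k =
      pos p.1 (padSteps n p.2) (n - k) := by
  induction k with
  | zero => rw [pos_zero, Nat.sub_zero, pos_padSteps_self]; rfl
  | succ k ih =>
    have hnk : n - k = n - 1 - k + 1 := by omega
    rw [pos_succ, ih (by omega), hnk, pos_succ, reversePath, padSteps_revSteps _ (by omega),
      show n - (k + 1) = n - 1 - k by omega]
    abel

lemma firstHitAt_reversePath_iff {n : ℕ} (D : Set (V d)) (p : V d × (Fin n → V d)) :
    FirstHitAt D (reversePath n p).1 n (padSteps n (reversePath n p).2) ↔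
      p.1 ∈ D ∧ Avoids D p.1 n (padSteps n p.2) := by
  rw [FirstHitAt, pos_reversePath p le_rfl, Nat.sub_self, pos_zero]
  refine and_congr_right fun _ => ⟨fun h k h1 h2 => ?_, fun h k hk => ?_⟩
  · have := h (n - k) (by omega)
    rwa [pos_reversePath p (by omega), Nat.sub_sub_self h2] at this
  · rw [pos_reversePath p hk.le]
    exact h (n - k) (by omega) (Nat.sub_le n k)

lemma sum_probN_eq_card (n : ℕ) (D : Finset (V d)) (Q : V d → (ℕ → V d) → Prop) :
    ∑ x ∈ D, probN d n (Q x) =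
      (((D ×ˢ stepSeqs d n).filter fun p => Q p.1 (padSteps n p.2)).card : ℝ) /
        ((2 * d : ℕ) : ℝ) ^ n := by
  simp only [probN_eq_sum_ite, ← Finset.sum_div, Finset.card_filter, Finset.sum_product]
  push_cast
  rfl

lemma sum_probN_avoids_eq_sum_probN_firstHitAt (n : ℕ) (D Y : Finset (V d))
    (hY : ∀ x ∈ D, ∀ s ∈ stepSeqs d n, x + ∑ i, s i ∈ Y) :
    ∑ x ∈ D, probN d n (Avoids ↑D x n) = ∑ y ∈ Y, probN d n (FirstHitAt ↑D y n) := by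
  rw [sum_probN_eq_card, sum_probN_eq_card]
  congr 2
  refine Finset.card_nbij' (reversePath n) (reversePath n) ?_ ?_
    (fun p _ => reversePath_involutive n p) (fun q _ => reversePath_involutive n q)
  · intro p hp
    simp only [Finset.coe_filter, Finset.mem_product] at hp ⊢
    obtain ⟨⟨hx, hs⟩, havoid⟩ := hp
    exact ⟨⟨hY _ hx _ hs, revSteps_mem_stepSeqs hs⟩,
      (firstHitAt_reversePath_iff _ p).mpr ⟨hx, havoid⟩⟩
  · intro q hq
    simp only [Finset.coe_filter, Finset.mem_product] at hq ⊢
    obtain ⟨⟨-, hs⟩, hfirst⟩ := hq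
    rw [← reversePath_involutive n q, firstHitAt_reversePath_iff] at hfirst
    exact ⟨⟨hfirst.1, revSteps_mem_stepSeqs hs⟩, hfirst.2⟩

lemma firstHitAt_iff_eq_find {D : Set (V d)} {y : V d} {s : ℕ → V d}
    (hD : ∃ k, pos y s k ∈ D) (n : ℕ) : FirstHitAt D y n s ↔ n = Nat.find hD := by
  refine ⟨fun ⟨hn, hbefore⟩ => le_antisymm ?_ (Nat.find_min' hD hn), ?_⟩
  · exact not_lt.mp fun hlt => hbefore _ hlt (Nat.find_spec hD)
  · rintro rfl
    exact ⟨Nat.find_spec hD, fun k hk => Nat.find_min hD hk⟩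

lemma sum_ite_firstHitAt_eq_ite_hitsBy (D : Set (V d)) (y : V d) (N : ℕ) (s : ℕ → V d) :
    (∑ n ∈ Finset.range (N + 1), if FirstHitAt D y n s then (1 : ℝ) else 0) =
      if HitsBy D y N s then 1 else 0 := by
  by_cases hhit : HitsBy D y N s
  · obtain ⟨k, hkN, hk⟩ := hhit
    have hD : ∃ k, pos y s k ∈ D := ⟨k, hk⟩
    have hfind : Nat.find hD < N + 1 := Nat.lt_succ_of_le ((Nat.find_min' hD hk).trans hkN)
    simp [firstHitAt_iff_eq_find hD, hfind, show HitsBy D y N s from ⟨k, hkN, hk⟩]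
  · rw [if_neg hhit]
    refine Finset.sum_eq_zero fun n hn => if_neg fun hfirst => hhit ?_
    exact ⟨n, Nat.lt_succ_iff.mp (Finset.mem_range.mp hn), hfirst.1⟩

lemma sum_probN_firstHitAt_eq_probN_hitsBy (hd : 0 < d) (D : Set (V d)) (y : V d) (N : ℕ) :
    ∑ n ∈ Finset.range (N + 1), probN d n (FirstHitAt D y n) = probN d N (HitsBy D y N) := by
  rw [Finset.sum_congr rfl fun n hn => (probN_eq_of_dependsOnFirst hd
    (Nat.lt_succ_iff.mp (Finset.mem_range.mp hn)) (dependsOnFirst_firstHitAt D y n)).symm]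
  simp only [probN_eq_sum_ite, ← Finset.sum_div]
  rw [Finset.sum_comm]
  simp only [sum_ite_firstHitAt_eq_ite_hitsBy]

lemma probN_or_add_probN_and (n : ℕ) (P Q : (ℕ → V d) → Prop) :
    probN d n (fun s => P s ∨ Q s) + probN d n (fun s => P s ∧ Q s) =
      probN d n P + probN d n Q := by
  simp only [probN_eq_sum_ite, ← add_div, ← Finset.sum_add_distrib]
  congr 1
  refine Finset.sum_congr rfl fun s _ => ?_
  by_cases hP : P (padSteps n s) <;> by_cases hQ : Q (padSteps n s) <;> simp [hP, hQ]

lemma probN_hitsBy_union_add_inter_le (A B : Set (V d)) (y : V d) (N : ℕ) :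
    probN d N (HitsBy (A ∪ B) y N) + probN d N (HitsBy (A ∩ B) y N) ≤
      probN d N (HitsBy A y N) + probN d N (HitsBy B y N) := by
  have hunion : HitsBy (A ∪ B) y N = fun s => HitsBy A y N s ∨ HitsBy B y N s := by
    ext s; simp only [HitsBy, Set.mem_union, and_or_left, exists_or]
  have hinter (s) : HitsBy (A ∩ B) y N s → HitsBy A y N s ∧ HitsBy B y N s :=
    fun ⟨k, hk, hA, hB⟩ => ⟨⟨k, hk, hA⟩, ⟨k, hk, hB⟩⟩
  calc _ ≤ probN d N (fun s => HitsBy A y N s ∨ HitsBy B y N s) +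
        probN d N (fun s => HitsBy A y N s ∧ HitsBy B y N s) := by
        rw [hunion]
        exact (add_le_add_iff_left _).mpr (probN_mono N hinter)
    _ = _ := probN_or_add_probN_and N _ _

noncomputable def escSum (D : Finset (V d)) (n : ℕ) : ℝ := ∑ x ∈ D, probN d n (Avoids ↑D x n)

lemma tendsto_escSum (hd : 0 < d) (D : Finset (V d)) :
    Tendsto (escSum D) atTop (𝓝 (cap D)) :=
  tendsto_finsetSum _ fun x _ => tendsto_probN_avoids hd _ x

-- A finite set outside of which no walk hits `D ⊆ E` by time `N`: the sum over `y ∈ ℤ^d`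
-- in the last-exit decomposition can be restricted to it.
def reach (E : Finset (V d)) (N : ℕ) : Finset (V d) :=
  (Finset.range (N + 1)).biUnion fun n =>
    (E ×ˢ stepSeqs d n).image fun p => p.1 + ∑ i, p.2 i

lemma sum_range_escSum_eq_sum_probN_hitsBy (hd : 0 < d) {D E : Finset (V d)} (hDE : D ⊆ E)
    (N : ℕ) :
    ∑ n ∈ Finset.range (N + 1), escSum D n = ∑ y ∈ reach E N, probN d N (HitsBy ↑D y N) := by
  have hreach (n) (hn : n ∈ Finset.range (N + 1)) :
      ∀ x ∈ D, ∀ s ∈ stepSeqs d n, x + ∑ i, s i ∈ reach E N := fun x hx s hs =>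
    Finset.mem_biUnion.mpr
      ⟨n, hn, Finset.mem_image.mpr ⟨(x, s), Finset.mem_product.mpr ⟨hDE hx, hs⟩, rfl⟩⟩
  unfold escSum
  rw [Finset.sum_congr rfl fun n hn =>
    sum_probN_avoids_eq_sum_probN_firstHitAt n D _ (hreach n hn), Finset.sum_comm]
  exact Finset.sum_congr rfl fun y _ => sum_probN_firstHitAt_eq_probN_hitsBy hd _ y N

lemma sum_range_escSum_union_add_inter_le (hd : 0 < d) (A B : Finset (V d)) (n : ℕ) :
    ∑ k ∈ Finset.range n, (escSum (A ∪ B) k + escSum (A ∩ B) k) ≤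
      ∑ k ∈ Finset.range n, (escSum A k + escSum B k) := by
  cases n with
  | zero => simp
  | succ N =>
    have hlastExit {D} (hD : D ⊆ A ∪ B) := sum_range_escSum_eq_sum_probN_hitsBy hd hD N
    rw [Finset.sum_add_distrib, Finset.sum_add_distrib, hlastExit subset_rfl,
      hlastExit Finset.inter_subset_union, hlastExit Finset.subset_union_left,
      hlastExit Finset.subset_union_right, ← Finset.sum_add_distrib, ← Finset.sum_add_distrib]
    refine Finset.sum_le_sum fun y _ => ?_
    simpa only [Finset.coe_union, Finset.coe_inter] using
      probN_hitsBy_union_add_inter_le (↑A) (↑B) y N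

theorem cap_union_add_cap_inter_le (hd : 0 < d) (A B : Finset (V d)) :
    cap (A ∪ B) + cap (A ∩ B) ≤ cap A + cap B := by
  have hcesaro (D : Finset (V d)) := (tendsto_escSum hd D).cesaro
  refine le_of_tendsto_of_tendsto' ((hcesaro (A ∪ B)).add (hcesaro (A ∩ B)))
    ((hcesaro A).add (hcesaro B)) fun n => ?_
  simp only [← mul_add, ← Finset.sum_add_distrib]
  exact mul_le_mul_of_nonneg_left (sum_range_escSum_union_add_inter_le hd A B n) (by positivity)

end SubmodularCapacity

/-- Subadditivity: `Cap(A ∪ B) ≤ Cap(A) + Cap(B) - Cap(A ∩ B)` for `d ≥ 3`. -/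
theorem cap_union_le {d : ℕ} (hd : 3 ≤ d) (A B : Finset (V d)) :
    cap (A ∪ B) ≤ cap A + cap B - cap (A ∩ B) := by
  linarith [cap_union_add_cap_inter_le (by omega : 0 < d) A B]

end SRW
end

section
/- Assume d ≥ 3. Let S : N → Z^d be any function and K ⊆ N be such that for some ρ ∈ (0,1) and r ≥ 1, the occupation count ℓ_K(Q(x,r)) := #{k ∈ K : S(k) ∈ Q(x,r)} satisfies ℓ_K(Q(x,r)) ≤ ρ r^d for all x ∈ rZ^d. Then there exists a constant C₃ > 0 (independent of ρ, r, S, K) such that for any R ≥ 2r and any z ∈ Z^d, Σ_{k∈K} 1{2r ≤ ‖S(k)−z‖ ≤ R} · ‖S(k)−z‖^{−(d−2)} ≤ C₃ ρ R². -/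
/-! The cubes of the partition meeting the ball of radius `s` around `z` number at most
`(2s/r + 2)^d`, so the ball contains at most `ρ (2s + 2r)^d` of the points `S k`. Hence a shell
`b ≤ ‖S k - z‖ ≤ 2b` with `b ≥ r` contributes at most `ρ (6b)^d / b^(d-2) = 6^d ρ b²`. Summing over
the dyadic shells `b = 2r·2^j ≤ R` gives a geometric series dominated by its last term, `O(ρ R²)`. -/

open Filter Finset MeasureTheory
open scoped symmDiff ENNReal

namespace SRW

lemma pow_log_floor_le (b : ℕ) {x : ℝ} (hx : 1 ≤ x) : (b : ℝ) ^ Nat.log b ⌊x⌋₊ ≤ x :=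
  calc (b : ℝ) ^ Nat.log b ⌊x⌋₊ ≤ ⌊x⌋₊ := by
        exact_mod_cast Nat.pow_log_le_self b (Nat.floor_pos.2 hx).ne'
    _ ≤ x := Nat.floor_le (by linarith)

lemma lt_pow_succ_log_floor {b : ℕ} (hb : 1 < b) (x : ℝ) :
    x < (b : ℝ) ^ (Nat.log b ⌊x⌋₊ + 1) :=
  calc x < ⌊x⌋₊ + 1 := Nat.lt_floor_add_one x
    _ ≤ (b : ℝ) ^ (Nat.log b ⌊x⌋₊ + 1) := by
        exact_mod_cast Nat.lt_pow_succ_log_self hb _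

/-- `k` is put in the dyadic shell `j = log₂ ⌊t k / a⌋`. -/
theorem sum_le_sum_dyadic_shells {ι : Type*} (T : Finset ι) (t f : ι → ℝ) {a R : ℝ}
    (ha : 0 < a) (ht : ∀ k ∈ T, a ≤ t k ∧ t k ≤ R) (B : ℕ → ℝ)
    (hB : ∀ j, ∀ T' ⊆ T, (∀ k ∈ T', a * 2 ^ j ≤ t k ∧ t k ≤ a * 2 ^ (j + 1)) →
      ∑ k ∈ T', f k ≤ B j) :
    ∑ k ∈ T, f k ≤ ∑ j ∈ range (Nat.log 2 ⌊R / a⌋₊ + 1), B j := by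
  have hmaps : ∀ k ∈ T, Nat.log 2 ⌊t k / a⌋₊ ∈ range (Nat.log 2 ⌊R / a⌋₊ + 1) := fun k hk =>
    mem_range.2 <| Nat.lt_succ_of_le <| Nat.log_mono_right <| Nat.floor_le_floor <|
      div_le_div_of_nonneg_right (ht k hk).2 ha.le
  rw [← sum_fiberwise_of_maps_to hmaps]
  refine sum_le_sum fun j _ => hB j _ (filter_subset _ _) fun k hk => ?_
  obtain ⟨hkT, rfl⟩ := mem_filter.1 hk
  have hlow := pow_log_floor_le 2 ((one_le_div ha).2 (ht k hkT).1)
  have hupp := lt_pow_succ_log_floor one_lt_two (t k / a)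
  push_cast at hlow hupp
  exact ⟨(le_div_iff₀' ha).1 hlow, ((div_lt_iff₀' ha).1 hupp).le⟩

lemma card_Icc_ceil_floor_le {a b : ℝ} (hab : a ≤ b) :
    ((Icc ⌈a⌉ ⌊b⌋).card : ℝ) ≤ b - a + 1 := by
  have hcard : ((Icc ⌈a⌉ ⌊b⌋).card : ℝ) = max ((⌊b⌋ + 1 - ⌈a⌉ : ℤ) : ℝ) 0 := by
    rw [Int.card_Icc]; exact_mod_cast Int.toNat_eq_max _
  rw [hcard]
  refine max_le ?_ (by linarith)
  push_cast
  linarith [Int.floor_le b, Int.le_ceil a]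

section Cubes

variable {d : ℕ}

lemma abs_coord_le_nrm (x : V d) (i : Fin d) : |(x i : ℝ)| ≤ nrm x := by
  rw [nrm, ← Real.sqrt_sq_eq_abs]
  exact Real.sqrt_le_sqrt <| single_le_sum (f := fun j => (x j : ℝ) ^ 2)
    (fun j _ => sq_nonneg _) (mem_univ i)

lemma abs_sub_le_of_mem_cube {x y : V d} {r : ℝ} (hy : y ∈ cube x r) (i : Fin d) :
    |(y i : ℝ) - x i| ≤ r / 2 :=
  abs_le.2 ⟨by linarith [(hy i).1], by linarith [(hy i).2]⟩

/-- The centre index of the cube of the partition `{Q(r m, r) : m ∈ ℤ^d}` containing `y`. -/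
noncomputable def cubeIndex (r : ℕ) (y : V d) : V d := fun i => ⌊(y i : ℝ) / r + 1 / 2⌋

lemma cast_nsmul_apply (r : ℕ) (m : V d) (i : Fin d) : (((r • m) i : ℤ) : ℝ) = r * m i := by
  simp

lemma mem_cube_cubeIndex {r : ℕ} (hr : 0 < r) (y : V d) :
    y ∈ cube (r • cubeIndex r y) r := by
  intro i
  have hr' : (0 : ℝ) < r := by exact_mod_cast hr
  have h1 := Int.floor_le ((y i : ℝ) / r + 1 / 2)
  have h2 := Int.lt_floor_add_one ((y i : ℝ) / r + 1 / 2)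
  have hy : (y i : ℝ) = r * ((y i : ℝ) / r) := by field_simp
  rw [cast_nsmul_apply, hy]
  constructor <;> simp only [cubeIndex] <;> nlinarith

lemma cubeIndex_mem_piFinset {r : ℕ} (hr : 0 < r) {y z : V d} {s : ℝ} (hy : nrm (y - z) ≤ s) :
    cubeIndex r y ∈ Fintype.piFinset fun i =>
      Icc ⌈((z i : ℝ) - (s + r / 2)) / r⌉ ⌊((z i : ℝ) + (s + r / 2)) / r⌋ := by
  have hr' : (0 : ℝ) < r := by exact_mod_cast hr
  refine Fintype.mem_piFinset.2 fun i => mem_Icc.2 ?_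
  have hcube := abs_sub_le_of_mem_cube (mem_cube_cubeIndex hr y) i
  have hyz := (abs_coord_le_nrm (y - z) i).trans hy
  rw [cast_nsmul_apply, abs_le] at hcube
  simp only [Pi.sub_apply, Int.cast_sub, abs_le] at hyz
  constructor
  · exact Int.ceil_le.2 <| (div_le_iff₀ hr').2 (by linarith)
  · exact Int.le_floor.2 <| (le_div_iff₀ hr').2 (by linarith)

open Classical in
def CubeOccupationLE (S : ℕ → V d) (K : Finset ℕ) (r : ℕ) (ρ : ℝ) : Prop :=
  ∀ m : V d, ((K.filter fun k => S k ∈ cube (r • m) (r : ℝ)).card : ℝ) ≤ ρ * (r : ℝ) ^ d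

variable {S : ℕ → V d} {K : Finset ℕ} {r : ℕ} {ρ : ℝ}

/-- The ball of radius `s` meets at most `(2s/r + 2)^d` cubes of the partition. -/
lemma card_filter_nrm_sub_le (hr : 0 < r) (hρ : 0 ≤ ρ) (hK : CubeOccupationLE S K r ρ)
    (z : V d) {s : ℝ} (hs : 0 ≤ s) :
    ((K.filter fun k => nrm (S k - z) ≤ s).card : ℝ) ≤ ρ * (2 * s + 2 * r) ^ d := by
  classical
  have hr' : (0 : ℝ) < r := by exact_mod_cast hr
  set M := Fintype.piFinset fun i =>
    Icc ⌈((z i : ℝ) - (s + r / 2)) / r⌉ ⌊((z i : ℝ) + (s + r / 2)) / r⌋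
  have hmaps : ∀ k ∈ K.filter fun k => nrm (S k - z) ≤ s, cubeIndex r (S k) ∈ M :=
    fun k hk => cubeIndex_mem_piFinset hr (mem_filter.1 hk).2
  have hfiber : ∀ m, ((K.filter fun k => nrm (S k - z) ≤ s).filter
      fun k => cubeIndex r (S k) = m) ⊆ K.filter fun k => S k ∈ cube (r • m) (r : ℝ) := by
    intro m k hk
    obtain ⟨hkK, rfl⟩ := mem_filter.1 hk
    exact mem_filter.2 ⟨(mem_filter.1 hkK).1, mem_cube_cubeIndex hr _⟩
  have hM : (M.card : ℝ) ≤ (2 * (s + r / 2) / r + 1) ^ d := by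
    calc (M.card : ℝ) = ∏ i, ((Icc ⌈((z i : ℝ) - (s + r / 2)) / r⌉
          ⌊((z i : ℝ) + (s + r / 2)) / r⌋).card : ℝ) := by
          rw [Fintype.card_piFinset, Nat.cast_prod]
      _ ≤ ∏ _i : Fin d, (2 * (s + r / 2) / r + 1) :=
          prod_le_prod (fun _ _ => by positivity) fun i _ =>
            (card_Icc_ceil_floor_le (by gcongr; linarith)).trans_eq (by ring)
      _ = (2 * (s + r / 2) / r + 1) ^ d := by rw [prod_const, card_univ, Fintype.card_fin]
  calc ((K.filter fun k => nrm (S k - z) ≤ s).card : ℝ)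
      = ∑ m ∈ M, (((K.filter fun k => nrm (S k - z) ≤ s).filter
          fun k => cubeIndex r (S k) = m).card : ℝ) := by
        exact_mod_cast card_eq_sum_card_fiberwise hmaps
    _ ≤ ∑ _m ∈ M, ρ * (r : ℝ) ^ d :=
        sum_le_sum fun m _ => (Nat.cast_le.2 (card_le_card (hfiber m))).trans (hK m)
    _ = M.card * (ρ * (r : ℝ) ^ d) := by rw [sum_const, nsmul_eq_mul]
    _ ≤ (2 * (s + r / 2) / r + 1) ^ d * (ρ * (r : ℝ) ^ d) := by gcongr
    _ = ρ * (2 * s + 2 * r) ^ d := by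
        rw [mul_left_comm, ← mul_pow]
        congr 2
        field_simp
        ring

lemma sum_one_div_nrm_pow_le (hd : 2 ≤ d) (hr : 0 < r) (hρ : 0 ≤ ρ)
    (hK : CubeOccupationLE S K r ρ) (z : V d) {b : ℝ} (hrb : r ≤ b) {T : Finset ℕ}
    (hT : T ⊆ K) (hTb : ∀ k ∈ T, b ≤ nrm (S k - z) ∧ nrm (S k - z) ≤ 2 * b) :
    ∑ k ∈ T, 1 / nrm (S k - z) ^ (d - 2) ≤ 6 ^ d * ρ * b ^ 2 := by
  have hb : 0 < b := lt_of_lt_of_le (by exact_mod_cast hr) hrb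
  have hcard : (T.card : ℝ) ≤ ρ * (6 * b) ^ d :=
    calc (T.card : ℝ) ≤ (K.filter fun k => nrm (S k - z) ≤ 2 * b).card :=
          Nat.cast_le.2 <| card_le_card fun k hk => mem_filter.2 ⟨hT hk, (hTb k hk).2⟩
      _ ≤ ρ * (2 * (2 * b) + 2 * r) ^ d := card_filter_nrm_sub_le hr hρ hK z (by positivity)
      _ ≤ ρ * (6 * b) ^ d := by gcongr; linarith
  calc ∑ k ∈ T, 1 / nrm (S k - z) ^ (d - 2) ≤ ∑ _k ∈ T, 1 / b ^ (d - 2) :=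
        sum_le_sum fun k hk => one_div_le_one_div_of_le (by positivity)
          (pow_le_pow_left₀ hb.le (hTb k hk).1 _)
    _ = T.card / b ^ (d - 2) := by rw [sum_const, nsmul_eq_mul, mul_one_div]
    _ ≤ ρ * (6 * b) ^ d / b ^ (d - 2) := by gcongr
    _ = 6 ^ d * ρ * b ^ 2 := by
        have hpow : b ^ d = b ^ (d - 2) * b ^ 2 := by rw [← pow_add, Nat.sub_add_cancel hd]
        rw [mul_pow, hpow]
        field_simp

end Cubes

open Classical in
/-- Local density bound: if the occupation counts of all cubes `Q(x,r)`, `x ∈ rℤ^d`,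
are at most `ρ r^d`, then for all `R ≥ 2r` and `z`,
`Σ_{k∈K, 2r ≤ ‖S(k)-z‖ ≤ R} ‖S(k)-z‖^{-(d-2)} ≤ C₃ ρ R²`. -/
theorem local_density_annulus_sum {d : ℕ} (hd : 3 ≤ d) :
    ∃ C₃ : ℝ, 0 < C₃ ∧ ∀ (ρ : ℝ), 0 < ρ → ρ < 1 → ∀ r : ℕ, 1 ≤ r →
      ∀ (S : ℕ → V d) (K : Finset ℕ),
      (∀ m : V d, ((K.filter fun k => S k ∈ cube (r • m) (r : ℝ)).card : ℝ)
          ≤ ρ * (r : ℝ) ^ d) →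
      ∀ R : ℝ, 2 * (r : ℝ) ≤ R → ∀ z : V d,
      ∑ k ∈ K.filter fun k => 2 * (r : ℝ) ≤ nrm (S k - z) ∧ nrm (S k - z) ≤ R,
          1 / nrm (S k - z) ^ (d - 2) ≤ C₃ * ρ * R ^ 2 := by
  refine ⟨4 * 6 ^ d, by positivity, fun ρ hρ _ r hr S K hK R hR z => ?_⟩
  have ha : (0 : ℝ) < 2 * r := by positivity
  set J := Nat.log 2 ⌊R / (2 * r)⌋₊
  have hJ : 2 * r * 2 ^ J ≤ R := by
    have := pow_log_floor_le 2 ((one_le_div ha).2 hR)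
    push_cast at this
    exact (le_div_iff₀' ha).1 this
  calc _ ≤ ∑ j ∈ range (J + 1), 6 ^ d * ρ * (2 * r * 2 ^ j) ^ 2 :=
        sum_le_sum_dyadic_shells _ _ _ ha (fun k hk => (mem_filter.1 hk).2) _
          fun j T hT hTj => sum_one_div_nrm_pow_le (by omega) hr hρ.le hK z
            ((by linarith : (r : ℝ) ≤ 2 * r).trans (le_mul_of_one_le_right ha.le
              (one_le_pow₀ one_le_two)))
            (hT.trans (filter_subset _ _))
            fun k hk => ⟨(hTj k hk).1, (hTj k hk).2.trans_eq (by ring)⟩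
    _ = 6 ^ d * ρ * (2 * r) ^ 2 * ((∑ j ∈ range (J + 1), 4 ^ j : ℕ) : ℝ) := by
        push_cast; rw [mul_sum]
        refine sum_congr rfl fun j _ => ?_
        rw [mul_pow, ← pow_mul, mul_comm j, pow_mul]; norm_num; ring
    _ ≤ 6 ^ d * ρ * (2 * r) ^ 2 * ((4 ^ (J + 1) : ℕ) : ℝ) := by
        gcongr
        exact (Nat.geomSum_lt (by norm_num) fun k hk => mem_range.1 hk).le
    _ = 4 * 6 ^ d * ρ * (2 * r * 2 ^ J) ^ 2 := by
        push_cast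
        rw [mul_pow _ (2 ^ J), ← pow_mul, mul_comm J, pow_mul]; ring
    _ ≤ 4 * 6 ^ d * ρ * R ^ 2 := by gcongr

end SRW
end
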